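/- arXiv:1108.1209 — 8 statements merged into one kernel-verified Lean document; each statement's English description precedes it below -/
import Mathlib

section
/- Let U be an open subset of ℂ, let z₀ ∈ U, and let f : U → ℂ be holomorphic with f(z₀) ≠ 0 and f'(z₀) ≠ 0. Then there exists ε > 0 such that the segment {z₀ + t·(f(z₀)/f'(z₀)) : t ∈ [0, ε]} is contained in U and the real-valued function t ↦ |f(z₀ + t·(f(z₀)/f'(z₀)))| is strictly increasing on the interval [0, ε]. -/
/-!
Put `w = f z₀ / f'(z₀)`, so that `f'(z₀) w = f(z₀)`. The derivative of `t ↦ ‖f(z₀ + t w)‖²` is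
`2 Re (conj f(z₀ + t w) · f'(z₀ + t w) w)`, which equals `2 ‖f z₀‖² > 0` at `t = 0`. Since `f'` is
continuous, the derivative stays positive on a short interval `[0, ε]`, and there the squared
modulus, hence the modulus, is strictly increasing.
-/

open Filter Topology Set

theorem strictMonoOn_Icc_of_hasDerivAt_pos {g g' : ℝ → ℝ} {a b : ℝ}
    (hg : ∀ t ∈ Icc a b, HasDerivAt g (g' t) t) (hpos : ∀ t ∈ Icc a b, 0 < g' t) :
    StrictMonoOn g (Icc a b) := by
  refine strictMonoOn_of_hasDerivWithinAt_pos (convex_Icc a b) (f' := g')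
    (fun t ht => (hg t ht).continuousAt.continuousWithinAt) (fun t ht => ?_) (fun t ht => ?_)
  · exact (hg t (interior_subset ht)).hasDerivWithinAt
  · exact hpos t (interior_subset ht)

theorem strictMonoOn_norm_of_strictMonoOn_norm_sq {α E : Type*} [Preorder α]
    [SeminormedAddCommGroup E] {g : α → E} {s : Set α}
    (h : StrictMonoOn (fun t => ‖g t‖ ^ 2) s) : StrictMonoOn (fun t => ‖g t‖) s :=
  fun _ hx _ hy hxy => lt_of_pow_lt_pow_left₀ 2 (norm_nonneg _) (h hx hy hxy)

section Line

variable {f : ℂ → ℂ} {z w : ℂ}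

theorem hasDerivAt_norm_sq_comp_line {t : ℝ} (hf : DifferentiableAt ℂ f (z + t * w)) :
    HasDerivAt (fun s : ℝ => ‖f (z + s * w)‖ ^ 2)
      (2 * inner ℝ (f (z + t * w)) (deriv f (z + t * w) * w)) t := by
  have hline : HasDerivAt (fun u : ℂ => z + u * w) w t := by
    simpa using ((hasDerivAt_id (t : ℂ)).mul_const w).const_add z
  exact (hf.hasDerivAt.comp (t : ℂ) hline).comp_ofReal.norm_sq

theorem continuousAt_inner_deriv_comp_line (hf : AnalyticAt ℂ f z) :
    ContinuousAt (fun s : ℝ => inner ℝ (f (z + s * w)) (deriv f (z + s * w) * w)) 0 := by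
  have hline : ContinuousAt (fun s : ℝ => z + s * w) 0 := by fun_prop
  have hz : z + ((0 : ℝ) : ℂ) * w = z := by simp
  exact ((hf.continuousAt.comp_of_eq hline hz).inner
    ((hf.deriv.continuousAt.comp_of_eq hline hz).mul continuousAt_const))

end Line

/-- Proposition "ascent 0", part (ii): for a holomorphic `f` on an open set `U` with
`f z₀ ≠ 0 ≠ f' z₀`, there is `ε > 0` such that the segment
`{z₀ + t (f z₀ / f' z₀) : t ∈ [0, ε]}` lies in `U` and
`t ↦ |f(z₀ + t f z₀ / f' z₀)|` is strictly increasing on `[0, ε]`. -/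
theorem stmt_1 (U : Set ℂ) (hU : IsOpen U) (z₀ : ℂ) (hz₀ : z₀ ∈ U)
    (f : ℂ → ℂ) (hf : DifferentiableOn ℂ f U)
    (hf0 : f z₀ ≠ 0) (hf'0 : deriv f z₀ ≠ 0) :
    ∃ ε > (0 : ℝ),
      (∀ t : ℝ, t ∈ Set.Icc 0 ε → z₀ + (t : ℂ) * (f z₀ / deriv f z₀) ∈ U) ∧
      StrictMonoOn (fun t : ℝ => ‖f (z₀ + (t : ℂ) * (f z₀ / deriv f z₀))‖)
        (Set.Icc 0 ε) := by
  set w := f z₀ / deriv f z₀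
  set ψ := fun s : ℝ => inner ℝ (f (z₀ + s * w)) (deriv f (z₀ + s * w) * w)
  have hψ0 : ψ 0 = ‖f z₀‖ ^ 2 := by
    simp only [ψ, w, Complex.ofReal_zero, zero_mul, add_zero, mul_div_cancel₀ _ hf'0,
      real_inner_self_eq_norm_sq]
  have hsegment : ∀ᶠ t : ℝ in 𝓝 0, z₀ + t * w ∈ U :=
    (Continuous.tendsto (by fun_prop) 0).eventually (by simpa using hU.mem_nhds hz₀)
  have hψ : ContinuousAt ψ 0 :=
    continuousAt_inner_deriv_comp_line (hf.analyticAt (hU.mem_nhds hz₀))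
  have hpos : ∀ᶠ t in 𝓝 0, 0 < ψ t :=
    hψ.eventually (lt_mem_nhds (hψ0 ▸ pow_pos (norm_pos_iff.2 hf0) 2))
  obtain ⟨ε, hε, hIcc⟩ := mem_nhdsGE_iff_exists_Icc_subset.1
    (nhdsWithin_le_nhds (hsegment.and hpos))
  refine ⟨ε, hε, fun t ht => (hIcc ht).1, strictMonoOn_norm_of_strictMonoOn_norm_sq ?_⟩
  refine strictMonoOn_Icc_of_hasDerivAt_pos (g' := fun t => 2 * ψ t)
    (fun t ht => ?_) (fun t ht => ?_)
  · exact hasDerivAt_norm_sq_comp_line (hf.differentiableAt (hU.mem_nhds (hIcc ht).1))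
  · exact mul_pos two_pos (hIcc ht).2
end

section
/- Let U be an open subset of ℂ, let z₀ ∈ U, let k ≥ 2 be an integer, and let f : U → ℂ be holomorphic with f(z₀) ≠ 0, with f⁽¹⁾(z₀) = f⁽²⁾(z₀) = ⋯ = f⁽ᵏ⁻¹⁾(z₀) = 0, and f⁽ᵏ⁾(z₀) ≠ 0. Let w ∈ ℂ be any complex number with wᵏ = f(z₀)/f⁽ᵏ⁾(z₀). Then there exists ε > 0 such that for every j ∈ {0, 1, …, k−1}, the segment {z₀ + t·e^{2πij/k}·w : t ∈ [0, ε]} is contained in U and the function t ↦ |f(z₀ + t·e^{2πij/k}·w)| is strictly increasing on [0, ε]; in particular |f| increases strictly on all k segments simultaneously. -/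
/-!
Write `f' z = (z - z₀) ^ (k - 1) * G z` with `G z₀ = f⁽ᵏ⁾(z₀) / (k - 1)!`. Along `z = z₀ + t u`
with `u ^ k = w ^ k`, the `t`-derivative of `|f|²` is `2 t ^ (k - 1) ⟪f z, w ^ k * G z⟫`, where
`⟪a, b⟫ = Re (conj a * b)`. By the choice of `w` this inner product equals `|f z₀|² / (k - 1)!`
at `z₀`, so by continuity it stays positive on a disc around `z₀`, which contains the initial
pieces of all `k` rays at once.
-/

open Complex Set Nat
open scoped RealInnerProductSpace

theorem strictMonoOn_norm_of_inner_deriv_pos {F : Type*} [NormedAddCommGroup F]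
    [InnerProductSpace ℝ F] {D : Set ℝ} (hD : Convex ℝ D) {h h' : ℝ → F}
    (hc : ContinuousOn h D) (hd : ∀ t ∈ interior D, HasDerivAt h (h' t) t)
    (hpos : ∀ t ∈ interior D, 0 < ⟪h t, h' t⟫) :
    StrictMonoOn (‖h ·‖) D := by
  have hsq : StrictMonoOn (‖h ·‖ ^ 2) D :=
    strictMonoOn_of_deriv_pos hD (hc.norm.pow 2) fun t ht => by
      rw [(hd t ht).norm_sq.deriv]
      exact mul_pos two_pos (hpos t ht)
  intro s hs t ht hst
  exact (pow_lt_pow_iff_left₀ (norm_nonneg _) (norm_nonneg _) two_ne_zero).1 (hsq hs ht hst)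

theorem AnalyticAt.exists_eq_pow_smul_of_iteratedDeriv_eq_zero {𝕜 E : Type*}
    [NontriviallyNormedField 𝕜] [CharZero 𝕜] [NormedAddCommGroup E] [NormedSpace 𝕜 E]
    [CompleteSpace E] {g : 𝕜 → E} {c : 𝕜} (hg : AnalyticAt 𝕜 g c) {n : ℕ}
    (hvan : ∀ i < n, iteratedDeriv i g c = 0) :
    ∃ G : 𝕜 → E, ContinuousAt G c ∧ G c = (n ! : 𝕜)⁻¹ • iteratedDeriv n g c ∧
      ∀ z, g z = (z - c) ^ n • G z := by
  have hg₀ : AnalyticAt 𝕜 (fun z => g (c + z)) 0 := by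
    rw [← add_zero c] at hg
    exact hg.comp_of_eq (by fun_prop) rfl
  obtain ⟨F, hF, hgF⟩ := hg₀.exists_eq_sum_add_pow_mul (n + 1)
  refine ⟨fun z => (n ! : 𝕜)⁻¹ • iteratedDeriv n g c + (z - c) • F (z - c), ?_, by simp, ?_⟩
  · have : ContinuousAt F (c - c) := by rw [sub_self]; exact hF.continuousAt
    fun_prop
  · intro z
    have htaylor := hgF (z - c)
    simp only [iteratedDeriv_comp_const_add, add_zero, add_sub_cancel, Finset.sum_range_succ]
      at htaylor
    rw [htaylor, Finset.sum_eq_zero fun i hi => by rw [hvan i (Finset.mem_range.1 hi), smul_zero]]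
    module

theorem strictMonoOn_norm_comp_ray {f : ℂ → ℂ} {z₀ u : ℂ} {ε : ℝ}
    (hf : ∀ t ∈ Icc 0 ε, DifferentiableAt ℂ f (z₀ + t * u))
    (hpos : ∀ t ∈ Ioo 0 ε, 0 < ⟪f (z₀ + t * u), deriv f (z₀ + t * u) * u⟫) :
    StrictMonoOn (fun t : ℝ => ‖f (z₀ + t * u)‖) (Icc 0 ε) := by
  have hderiv : ∀ t ∈ Icc 0 ε,
      HasDerivAt (fun s : ℝ => f (z₀ + s * u)) (deriv f (z₀ + t * u) * u) t := fun t ht => by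
    have hray : HasDerivAt (fun z : ℂ => z₀ + z * u) u t := by
      simpa using ((hasDerivAt_id (t : ℂ)).mul_const u).const_add z₀
    exact ((hf t ht).hasDerivAt.comp (t : ℂ) hray).comp_ofReal
  refine strictMonoOn_norm_of_inner_deriv_pos (convex_Icc 0 ε)
    (fun t ht => (hderiv t ht).continuousAt.continuousWithinAt) (fun t ht => hderiv t (interior_subset ht)) ?_
  simpa only [interior_Icc] using hpos

theorem exp_two_pi_I_mul_div_pow_self (j : ℕ) {k : ℕ} (hk : k ≠ 0) :
    exp (2 * Real.pi * I * j / k) ^ k = 1 := by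
  rw [← exp_nat_mul, ← exp_nat_mul_two_pi_mul_I j]
  congr 1
  field_simp

theorem norm_le_norm_add_one_of_pow_eq {u c : ℂ} {n : ℕ} (hn : n ≠ 0) (hu : u ^ n = c) :
    ‖u‖ ≤ ‖c‖ + 1 := by
  rcases le_or_gt ‖u‖ 1 with h | h
  · linarith [norm_nonneg c]
  · linarith [le_self_pow₀ h.le hn, show ‖u‖ ^ n = ‖c‖ by rw [← norm_pow, hu]]

theorem exists_strictMonoOn_norm_along_rays {U : Set ℂ} (hU : IsOpen U) {z₀ : ℂ} (hz₀ : z₀ ∈ U)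
    {f G : ℂ → ℂ} (hf : DifferentiableOn ℂ f U) {m : ℕ}
    (hfG : ∀ z ∈ U, deriv f z = (z - z₀) ^ m * G z) (hGc : ContinuousAt G z₀) {c : ℂ}
    (hpos : 0 < ⟪f z₀, c * G z₀⟫) :
    ∃ ε > (0 : ℝ), ∀ u : ℂ, u ^ (m + 1) = c →
      (∀ t ∈ Icc 0 ε, z₀ + t * u ∈ U) ∧
      StrictMonoOn (fun t : ℝ => ‖f (z₀ + t * u)‖) (Icc 0 ε) := by
  set Φ : ℂ → ℝ := fun z => ⟪f z, c * G z⟫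
  have hΦ : ContinuousAt Φ z₀ :=
    (hf.differentiableAt (hU.mem_nhds hz₀)).continuousAt.inner (continuousAt_const.mul hGc)
  obtain ⟨r, hr, hball⟩ := Metric.eventually_nhds_iff.1
    ((hΦ.eventually (lt_mem_nhds hpos)).and (hU.mem_nhds hz₀))
  set ε := r / (‖c‖ + 2)
  have hε : 0 < ε := by positivity
  refine ⟨ε, hε, fun u hu => ?_⟩
  have hray : ∀ t ∈ Icc 0 ε, 0 < Φ (z₀ + t * u) ∧ z₀ + t * u ∈ U := by
    intro t ht
    apply hball
    rw [dist_eq_norm, add_sub_cancel_left, norm_mul, norm_real, Real.norm_of_nonneg ht.1]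
    calc t * ‖u‖ ≤ ε * (‖c‖ + 1) := by
          gcongr
          exacts [ht.2, norm_le_norm_add_one_of_pow_eq m.succ_ne_zero hu]
      _ < ε * (‖c‖ + 2) := by gcongr; norm_num
      _ = r := div_mul_cancel₀ r (by positivity)
  refine ⟨fun t ht => (hray t ht).2, strictMonoOn_norm_comp_ray
    (fun t ht => hf.differentiableAt (hU.mem_nhds (hray t ht).2)) fun t ht => ?_⟩
  have hdir : deriv f (z₀ + t * u) * u = (t ^ m : ℝ) • (c * G (z₀ + t * u)) := by
    rw [hfG _ (hray t (Ioo_subset_Icc_self ht)).2, ← hu, add_sub_cancel_left, Complex.real_smul]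
    push_cast
    ring
  rw [hdir, real_inner_smul_right]
  exact mul_pos (pow_pos ht.1 _) (hray t (Ioo_subset_Icc_self ht)).1

/-- Proposition "saddle ascent 0": from a point where the derivatives of order
`1, …, k-1` vanish but `f z₀ ≠ 0 ≠ f⁽ᵏ⁾ z₀`, with `w` a `k`-th root of
`f z₀ / f⁽ᵏ⁾ z₀`, there is `ε > 0` such that along each of the `k` radial
segments `t ↦ z₀ + t e^{2πij/k} w`, `t ∈ [0, ε]`, the segment lies in `U`
and `|f|` strictly increases. -/
theorem stmt_2 (U : Set ℂ) (hU : IsOpen U) (z₀ : ℂ) (hz₀ : z₀ ∈ U)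
    (k : ℕ) (hk : 2 ≤ k) (f : ℂ → ℂ) (hf : DifferentiableOn ℂ f U)
    (hf0 : f z₀ ≠ 0)
    (hmid : ∀ j : ℕ, 1 ≤ j → j ≤ k - 1 → iteratedDeriv j f z₀ = 0)
    (hfk : iteratedDeriv k f z₀ ≠ 0)
    (w : ℂ) (hw : w ^ k = f z₀ / iteratedDeriv k f z₀) :
    ∃ ε > (0 : ℝ), ∀ j : ℕ, j < k →
      (∀ t : ℝ, t ∈ Set.Icc 0 ε →
        z₀ + (t : ℂ) * (Complex.exp (2 * Real.pi * Complex.I * j / k) * w) ∈ U) ∧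
      StrictMonoOn
        (fun t : ℝ =>
          ‖f (z₀ + (t : ℂ) * (Complex.exp (2 * Real.pi * Complex.I * j / k) * w))‖)
        (Set.Icc 0 ε) := by
  obtain ⟨m, rfl⟩ : ∃ m, k = m + 1 := ⟨k - 1, by omega⟩
  obtain ⟨G, hGc, hGz₀, hfG⟩ := (hf.analyticOnNhd hU z₀ hz₀).deriv
    |>.exists_eq_pow_smul_of_iteratedDeriv_eq_zero (n := m) fun i hi => by
      rw [← iteratedDeriv_succ', hmid (i + 1) (by omega) (by omega)]
  rw [← iteratedDeriv_succ'] at hGz₀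
  have hlead : w ^ (m + 1) * G z₀ = (m ! : ℝ)⁻¹ • f z₀ := by
    rw [hGz₀, hw, smul_eq_mul, Complex.real_smul]
    push_cast
    field_simp
  have hpos : 0 < ⟪f z₀, w ^ (m + 1) * G z₀⟫ := by
    rw [hlead, real_inner_smul_right, real_inner_self_eq_norm_sq]
    positivity
  obtain ⟨ε, hε, hrays⟩ := exists_strictMonoOn_norm_along_rays hU hz₀ hf (fun z _ => hfG z) hGc hpos
  refine ⟨ε, hε, fun j _ => hrays _ ?_⟩
  rw [mul_pow, exp_two_pi_I_mul_div_pow_self j m.succ_ne_zero, one_mul]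
end

section
/- Let ε > 0 and let g be holomorphic on an open subset of ℂ containing the real segment [0, ε], with g(0) = 1. Suppose that for every u ∈ [0, ε] the derivative g'(u) lies in the open sector S_{π/4}, i.e. Re g'(u) > |Im g'(u)|. Then for every u ∈ (0, ε] the value g(u) also lies in S_{π/4}, and the function u ↦ |g(u)| is strictly increasing on [0, ε]. -/
/-!
`S_{π/4}` is the convex cone cut out by the linear forms `re - im > 0` and `re + im > 0`.
Both forms are positive on `g'` along the segment, so they increase along `u ↦ g(u)`; hence
`g(u) - g(0) ∈ S_{π/4}`, and `g(u) ∈ 1 + S_{π/4} ⊆ S_{π/4}`. Two vectors of `S_{π/4}` make an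
angle less than `π/2`, so `d/du |g(u)|² = 2 ⟪g(u), g'(u)⟫ > 0`.
-/

open Set

namespace Complex

/-- `S_{π/4}`: the complex numbers of argument in `(-π/4, π/4)`. -/
def sectorPiDivFour : Set ℂ := {z | |z.im| < z.re}

lemma mem_sectorPiDivFour_iff {z : ℂ} :
    z ∈ sectorPiDivFour ↔ 0 < z.re - z.im ∧ 0 < z.re + z.im := by
  show |z.im| < z.re ↔ _
  rw [abs_lt]
  constructor <;> rintro ⟨h₁, h₂⟩ <;> constructor <;> linarith

lemma one_mem_sectorPiDivFour : (1 : ℂ) ∈ sectorPiDivFour := by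
  simp [sectorPiDivFour]

lemma add_mem_sectorPiDivFour {z w : ℂ} (hz : z ∈ sectorPiDivFour)
    (hw : w ∈ sectorPiDivFour) : z + w ∈ sectorPiDivFour := by
  rw [mem_sectorPiDivFour_iff] at *
  simp only [add_re, add_im]
  constructor <;> linarith [hz.1, hz.2, hw.1, hw.2]

lemma inner_pos_of_mem_sectorPiDivFour {z w : ℂ} (hz : z ∈ sectorPiDivFour)
    (hw : w ∈ sectorPiDivFour) : 0 < inner ℝ z w := by
  have hre : |z.im| * |w.im| < z.re * w.re :=
    mul_lt_mul'' hz hw (abs_nonneg _) (abs_nonneg _)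
  have him : -(|z.im| * |w.im|) ≤ z.im * w.im := by
    rw [← abs_mul]
    exact neg_abs_le _
  have : inner ℝ z w = z.re * w.re + z.im * w.im := by
    simp only [Complex.inner, mul_re, conj_re, conj_im]
    ring
  rw [this]
  linarith

end Complex

open Complex

section Segment

variable {E : Type*} [NormedAddCommGroup E] [NormedSpace ℝ E] {f : ℝ → E} {f' : ℝ → E}
  {a b : ℝ}

lemma strictMonoOn_comp_of_hasDerivAt (L : E →L[ℝ] ℝ) (hf : ContinuousOn f (Icc a b))
    (hf' : ∀ t ∈ Ioo a b, HasDerivAt f (f' t) t) (hpos : ∀ t ∈ Ioo a b, 0 < L (f' t)) :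
    StrictMonoOn (fun t => L (f t)) (Icc a b) := by
  refine strictMonoOn_of_hasDerivWithinAt_pos (f' := fun t => L (f' t)) (convex_Icc a b)
    (L.continuous.comp_continuousOn hf) (fun t ht => ?_) (fun t ht => ?_)
  · rw [interior_Icc] at ht
    exact (L.hasFDerivAt.comp_hasDerivAt t (hf' t ht)).hasDerivWithinAt
  · rw [interior_Icc] at ht
    exact hpos t ht

end Segment

section Sector

variable {f f' : ℝ → ℂ} {a b : ℝ}

lemma sub_mem_sectorPiDivFour_of_hasDerivAt (hf : ContinuousOn f (Icc a b))
    (hf' : ∀ t ∈ Ioo a b, HasDerivAt f (f' t) t)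
    (hsector : ∀ t ∈ Ioo a b, f' t ∈ sectorPiDivFour) {s t : ℝ} (hs : s ∈ Icc a b)
    (ht : t ∈ Icc a b) (hst : s < t) : f t - f s ∈ sectorPiDivFour := by
  have hdiff := strictMonoOn_comp_of_hasDerivAt (reCLM - imCLM) hf hf'
    fun u hu => by simpa using (mem_sectorPiDivFour_iff.1 (hsector u hu)).1
  have hsum := strictMonoOn_comp_of_hasDerivAt (reCLM + imCLM) hf hf'
    fun u hu => by simpa using (mem_sectorPiDivFour_iff.1 (hsector u hu)).2
  have h₁ := hdiff hs ht hst
  have h₂ := hsum hs ht hst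
  simp only [sub_apply, add_apply, reCLM_apply,
    imCLM_apply] at h₁ h₂
  rw [mem_sectorPiDivFour_iff, sub_re, sub_im]
  constructor <;> linarith

lemma strictMonoOn_norm_of_mem_sectorPiDivFour (hf : ContinuousOn f (Icc a b))
    (hf' : ∀ t ∈ Ioo a b, HasDerivAt f (f' t) t)
    (hf_sector : ∀ t ∈ Ioo a b, f t ∈ sectorPiDivFour)
    (hf'_sector : ∀ t ∈ Ioo a b, f' t ∈ sectorPiDivFour) :
    StrictMonoOn (fun t => ‖f t‖) (Icc a b) := by
  have hsq : StrictMonoOn (fun t => ‖f t‖ ^ 2) (Icc a b) := by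
    refine strictMonoOn_of_hasDerivWithinAt_pos (f' := fun t => 2 * inner ℝ (f t) (f' t))
      (convex_Icc a b) (hf.norm.pow 2) (fun t ht => ?_) (fun t ht => ?_)
    · rw [interior_Icc] at ht
      exact (hf' t ht).norm_sq.hasDerivWithinAt
    · rw [interior_Icc] at ht
      have := inner_pos_of_mem_sectorPiDivFour (hf_sector t ht) (hf'_sector t ht)
      positivity
  exact fun s hs t ht hst => lt_of_pow_lt_pow_left₀ 2 (norm_nonneg _) (hsq hs ht hst)

end Sector

theorem stmt_3_general (ε : ℝ) (V : Set ℂ) (hV : IsOpen V)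
    (hseg : ∀ t : ℝ, t ∈ Set.Icc 0 ε → (t : ℂ) ∈ V)
    (g : ℂ → ℂ) (hg : DifferentiableOn ℂ g V) (hg0 : g 0 = 1)
    (hd : ∀ t : ℝ, t ∈ Set.Icc 0 ε → (deriv g t).re > |(deriv g t).im|) :
    (∀ t : ℝ, t ∈ Set.Ioc 0 ε → (g t).re > |(g t).im|) ∧
    StrictMonoOn (fun t : ℝ => ‖g t‖) (Set.Icc 0 ε) := by
  have hderiv : ∀ t ∈ Icc 0 ε, HasDerivAt (fun s : ℝ => g s) (deriv g t) t := fun t ht =>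
    (hg.differentiableAt (hV.mem_nhds (hseg t ht))).hasDerivAt.comp_ofReal
  have hcont : ContinuousOn (fun s : ℝ => g s) (Icc 0 ε) := fun t ht =>
    (hderiv t ht).continuousAt.continuousWithinAt
  have hderiv' : ∀ t ∈ Ioo 0 ε, HasDerivAt (fun s : ℝ => g s) (deriv g t) t := fun t ht =>
    hderiv t (Ioo_subset_Icc_self ht)
  have hsector' : ∀ t ∈ Ioo 0 ε, deriv g t ∈ sectorPiDivFour := fun t ht =>
    hd t (Ioo_subset_Icc_self ht)
  have hsector : ∀ t ∈ Ioc 0 ε, g t ∈ sectorPiDivFour := by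
    intro t ht
    have hsub := sub_mem_sectorPiDivFour_of_hasDerivAt hcont hderiv' hsector'
      ⟨le_rfl, ht.1.le.trans ht.2⟩ (Ioc_subset_Icc_self ht) ht.1
    simpa [hg0] using add_mem_sectorPiDivFour one_mem_sectorPiDivFour hsub
  exact ⟨hsector, strictMonoOn_norm_of_mem_sectorPiDivFour hcont hderiv'
    (fun t ht => hsector t (Ioo_subset_Ioc_self ht)) hsector'⟩

/-- Key lemma for Proposition "ascent 0": if `g` is holomorphic near the real
segment `[0, ε]`, `g 0 = 1`, and `g'` stays in the open sector
`S_{π/4} = {z : Re z > |Im z|}` on `[0, ε]`, then `g` itself stays in `S_{π/4}`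
on `(0, ε]` and `t ↦ |g t|` is strictly increasing on `[0, ε]`. -/
theorem stmt_3 (ε : ℝ) (hε : 0 < ε) (V : Set ℂ) (hV : IsOpen V)
    (hseg : ∀ t : ℝ, t ∈ Set.Icc 0 ε → (t : ℂ) ∈ V)
    (g : ℂ → ℂ) (hg : DifferentiableOn ℂ g V) (hg0 : g 0 = 1)
    (hd : ∀ t : ℝ, t ∈ Set.Icc 0 ε → (deriv g t).re > |(deriv g t).im|) :
    (∀ t : ℝ, t ∈ Set.Ioc 0 ε → (g t).re > |(g t).im|) ∧
    StrictMonoOn (fun t : ℝ => ‖g t‖) (Set.Icc 0 ε) :=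
  stmt_3_general ε V hV hseg g hg hg0 hd
end

section
/- Let P be a polynomial with complex coefficients, let c ∈ ℂ with P'(c) ≠ 0, and let r > 0. Define the Krawczyk set K := { c − P(c)/P'(c) + (1 − P'(z)/P'(c))·w : z, w ∈ ℂ, |z − c| ≤ r, |w| ≤ r }. If K is contained in the open ball {ζ ∈ ℂ : |ζ − c| < r}, then P has exactly one root in the closed ball {ζ ∈ ℂ : |ζ − c| ≤ r}. -/
/-!
Put `d = P'(c)`. The roots of `P` are the fixed points of the simplified Newton map
`g x = x - P(x)/d`, whose derivative is `1 - P'(x)/d`. For fixed `z`, the supremum of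
`‖-P(c)/d + (1 - P'(z)/d) w‖` over `‖w‖ ≤ r` is `‖P(c)/d‖ + ‖1 - P'(z)/d‖ r`, so the hypothesis
gives `‖P(c)/d‖ + k r < r`, where `k < 1` is the maximum of `‖1 - P'(z)/d‖` on the compact ball.
By the mean value inequality `g` is then a `k`-contraction of the closed ball into itself, and
the Banach fixed point theorem gives exactly one root there.
-/

open Metric Polynomial
open scoped NNReal

theorem existsUnique_fixedPoint_mem_closedBall {X : Type*} [MetricSpace X] [CompleteSpace X]
    {f : X → X} {c : X} {r : ℝ} {K : ℝ≥0} (hK : K < 1)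
    (hf : LipschitzOnWith K f (closedBall c r)) (hc : dist (f c) c + K * r ≤ r) :
    ∃! x ∈ closedBall c r, f x = x := by
  have hK' : (K : ℝ) < 1 := hK
  have hr : 0 ≤ r := by nlinarith [dist_nonneg (x := f c) (y := c), K.coe_nonneg]
  have hmaps : Set.MapsTo f (closedBall c r) (closedBall c r) := fun x hx ↦ by
    have := hf.dist_le_mul x hx c (mem_closedBall_self hr)
    rw [mem_closedBall] at hx ⊢
    calc dist (f x) c ≤ dist (f x) (f c) + dist (f c) c := dist_triangle _ _ _
      _ ≤ K * r + dist (f c) c := by gcongr; exact this.trans (by gcongr)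
      _ ≤ r := by linarith
  obtain ⟨x, hx, hfx, -⟩ := ContractingWith.exists_fixedPoint' isClosed_closedBall.isComplete hmaps
    ⟨hK, hmaps.lipschitzOnWith_iff_restrict.1 hf⟩ (mem_closedBall_self hr) (edist_ne_top _ _)
  refine ⟨x, ⟨hx, hfx⟩, fun y ⟨hy, hfy⟩ ↦ dist_le_zero.1 ?_⟩
  have := hf.dist_le_mul y hy x hx
  rw [hfy, hfx] at this
  nlinarith [dist_nonneg (x := y) (y := x)]

theorem Complex.exists_norm_eq_norm_add_mul_eq (a L : ℂ) {r : ℝ} (hr : 0 ≤ r) :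
    ∃ w : ℂ, ‖w‖ = r ∧ ‖a + L * w‖ = ‖a‖ + ‖L‖ * r := by
  refine ⟨r * exp (↑(arg a - arg L) * I), ?_, ?_⟩
  · rw [norm_mul, norm_exp_ofReal_mul_I, mul_one, norm_real, Real.norm_of_nonneg hr]
  have hrot : exp (arg L * I) * exp (↑(arg a - arg L) * I) = exp (arg a * I) := by
    rw [← exp_add]; push_cast; ring_nf
  have : a + L * (r * exp (↑(arg a - arg L) * I)) = ↑(‖a‖ + ‖L‖ * r) * exp (arg a * I) := by
    rw [ofReal_add, ofReal_mul]
    linear_combination -(norm_mul_exp_arg_mul_I a) - (r * exp (↑(arg a - arg L) * I)) *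
      norm_mul_exp_arg_mul_I L + (‖L‖ * r : ℂ) * hrot
  rw [this, norm_mul, norm_exp_ofReal_mul_I, mul_one, norm_real,
    Real.norm_of_nonneg (by positivity)]

namespace Polynomial

def simplifiedNewtonMap {K : Type*} [Field K] (P : K[X]) (d x : K) : K := x - P.eval x / d

theorem simplifiedNewtonMap_eq_self_iff {K : Type*} [Field K] {P : K[X]} {d : K} (hd : d ≠ 0)
    {x : K} : P.simplifiedNewtonMap d x = x ↔ P.eval x = 0 := by
  simp [simplifiedNewtonMap, hd]

theorem hasDerivAt_simplifiedNewtonMap {𝕜 : Type*} [NontriviallyNormedField 𝕜] (P : 𝕜[X])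
    (d x : 𝕜) : HasDerivAt (P.simplifiedNewtonMap d) (1 - P.derivative.eval x / d) x :=
  (hasDerivAt_id x).sub ((P.hasDerivAt x).div_const d)

end Polynomial

/-- Krawczyk–Rump test: if the Krawczyk set
`K = {c - P(c)/P'(c) + (1 - P'(z)/P'(c))·w : |z - c| ≤ r, |w| ≤ r}` is contained
in the open ball of radius `r` about `c`, then `P` has exactly one root in the
closed ball of radius `r` about `c`. -/
theorem stmt_6 (P : Polynomial ℂ) (c : ℂ) (r : ℝ) (hr : 0 < r)
    (hP' : P.derivative.eval c ≠ 0)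
    (hK : ∀ z w : ℂ, ‖z - c‖ ≤ r → ‖w‖ ≤ r →
      ‖(c - P.eval c / P.derivative.eval c +
          (1 - P.derivative.eval z / P.derivative.eval c) * w) - c‖ < r) :
    ∃! ζ : ℂ, ‖ζ - c‖ ≤ r ∧ P.eval ζ = 0 := by
  set d := P.derivative.eval c
  set L : ℂ → ℂ := fun z ↦ 1 - P.derivative.eval z / d
  have hbound : ∀ z ∈ closedBall c r, ‖P.eval c / d‖ + ‖L z‖ * r < r := fun z hz ↦ by
    obtain ⟨w, hw, hnorm⟩ := Complex.exists_norm_eq_norm_add_mul_eq (-(P.eval c / d)) (L z) hr.le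
    rw [norm_neg] at hnorm
    rw [← hnorm]
    convert hK z w (mem_closedBall_iff_norm.1 hz) hw.le using 2
    ring
  obtain ⟨z₀, hz₀, hmax⟩ := (isCompact_closedBall c r).exists_isMaxOn (nonempty_closedBall.2 hr.le)
    (f := fun z ↦ ‖L z‖₊) (by fun_prop : Continuous fun z ↦ ‖L z‖₊).continuousOn
  have hk : ‖L z₀‖₊ < 1 := by
    have hz₀bound := hbound z₀ hz₀
    have : ‖L z₀‖ < 1 := (mul_lt_iff_lt_one_left hr).1 (by linarith [norm_nonneg (P.eval c / d)])
    exact_mod_cast this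
  have hlip : LipschitzOnWith ‖L z₀‖₊ (P.simplifiedNewtonMap d) (closedBall c r) :=
    (convex_closedBall c r).lipschitzOnWith_of_nnnorm_hasDerivWithin_le
      (fun x _ ↦ (P.hasDerivAt_simplifiedNewtonMap d x).hasDerivWithinAt) (isMaxOn_iff.1 hmax)
  have hc : dist (P.simplifiedNewtonMap d c) c + ‖L z₀‖₊ * r ≤ r := by
    simpa [dist_eq_norm, simplifiedNewtonMap] using (hbound z₀ hz₀).le
  refine (existsUnique_congr fun ζ ↦ ?_).1 (existsUnique_fixedPoint_mem_closedBall hk hlip hc)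
  rw [mem_closedBall_iff_norm, P.simplifiedNewtonMap_eq_self_iff hP']
end

section
/- Let Q : ℂ × ℂ → ℂ be a polynomial, let (x₀, y₀) ∈ ℂ² with x₀ ≠ 0, y₀ ≠ 0, Q(x₀, y₀) = 0 and Q_y(x₀, y₀) ≠ 0, and let y be a holomorphic function on a neighborhood of x₀ with y(x₀) = y₀ and Q(x, y(x)) = 0 identically. Let r, s > 0 and define G(x) := r/x + s·y'(x)/y(x) (the logarithmic derivative of x^r y(x)^s). If G(x₀) = 0 and G'(x₀) = 0, then s·x₀·Q_x(x₀,y₀) − r·y₀·Q_y(x₀,y₀) = 0 and y₀·Q_y(x₀,y₀)²·(Q_x(x₀,y₀) + x₀·Q_{xx}(x₀,y₀)) + x₀·Q_x(x₀,y₀)²·(Q_y(x₀,y₀) + y₀·Q_{yy}(x₀,y₀)) − 2·x₀·y₀·Q_x(x₀,y₀)·Q_y(x₀,y₀)·Q_{xy}(x₀,y₀) = 0. -/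
/-!
Differentiating `Q(x, y(x)) = 0` once and twice gives, at `x₀` and with `a = y'(x₀)`,
`b = y''(x₀)`, the relations `Q_x + Q_y a = 0` and `Q_xx + 2 Q_xy a + Q_yy a² + Q_y b = 0`.
The condition `G(x₀) = 0` reads `r y₀ + s x₀ a = 0`; substituting it for `r` in `G'(x₀) = 0`
leaves `x₀ y₀ b - x₀ a² + y₀ a = 0`, free of `r` and `s`. Hence `s x Q_x - r y Q_y` equals
`s x₀ (Q_x + Q_y a)`, and modulo `Q_x + Q_y a` the cubic generator equals
`x₀ y₀ Q_y² (Q_xx + 2 Q_xy a + Q_yy a² + Q_y b) - Q_y³ (x₀ y₀ b - x₀ a² + y₀ a)`.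
-/

open MvPolynomial Filter Topology

namespace MvPolynomial

theorem pderiv_pderiv_comm {R σ : Type*} [CommSemiring R] (i j : σ) (p : MvPolynomial σ R) :
    pderiv i (pderiv j p) = pderiv j (pderiv i p) := by
  classical
  induction p using MvPolynomial.induction_on with
  | C a => simp
  | add p q hp hq => simp [hp, hq]
  | mul_X p k hp =>
    simp only [pderiv_mul, map_add, pderiv_X, hp, Pi.single_apply, apply_ite (pderiv _),
      pderiv_one, map_zero, ite_self, mul_zero, add_zero]
    ring

theorem hasDerivAt_eval_comp {𝕜 σ : Type*} [NontriviallyNormedField 𝕜] [Fintype σ]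
    (p : MvPolynomial σ 𝕜) {u : 𝕜 → σ → 𝕜} {u' : σ → 𝕜} {x : 𝕜} (hu : HasDerivAt u u' x) :
    HasDerivAt (fun t => eval (u t) p) (∑ i, eval (u x) (pderiv i p) * u' i) x := by
  classical
  induction p using MvPolynomial.induction_on with
  | C a => simpa using hasDerivAt_const x a
  | add p q hp hq => simpa only [map_add, add_mul, Finset.sum_add_distrib] using hp.fun_add hq
  | mul_X p k hp =>
    simp only [map_mul, eval_X, pderiv_mul, pderiv_X, map_add]
    refine (hp.fun_mul (hasDerivAt_pi.1 hu k)).congr_deriv ?_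
    simp only [Pi.single_apply, apply_ite (eval (u x)), map_one, map_zero, mul_ite, mul_one,
      mul_zero, add_mul, ite_mul, zero_mul, Finset.sum_add_distrib, Finset.sum_ite_eq,
      Finset.mem_univ, if_true, Finset.sum_mul, mul_right_comm _ (u x k), add_comm]

section Graph

variable {𝕜 : Type*} [NontriviallyNormedField 𝕜] {Q : MvPolynomial (Fin 2) 𝕜} {y : 𝕜 → 𝕜}
  {V : Set 𝕜} {x a b : 𝕜}

theorem hasDerivAt_eval_graph (Q : MvPolynomial (Fin 2) 𝕜) (hy : HasDerivAt y a x) :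
    HasDerivAt (fun t => eval ![t, y t] Q)
      (eval ![x, y x] (pderiv 0 Q) + eval ![x, y x] (pderiv 1 Q) * a) x := by
  have hu : HasDerivAt (fun t => ![t, y t]) ![1, a] x :=
    hasDerivAt_pi.2 (Fin.forall_fin_two.2 ⟨hasDerivAt_id x, hy⟩)
  simpa using hasDerivAt_eval_comp Q hu

theorem _root_.HasDerivAt.eq_zero_of_eventuallyEq_zero {f : 𝕜 → 𝕜} {f' : 𝕜}
    (hf : HasDerivAt f f' x) (h : f =ᶠ[𝓝 x] 0) : f' = 0 :=
  hf.unique ((hasDerivAt_const x 0).congr_of_eventuallyEq h)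

variable (hV : IsOpen V) (hy : DifferentiableOn 𝕜 y V)
  (hgraph : ∀ x ∈ V, eval ![x, y x] Q = 0)
include hV hy hgraph

theorem eval_pderiv_graph_eq_zero (hx : x ∈ V) :
    eval ![x, y x] (pderiv 0 Q) + eval ![x, y x] (pderiv 1 Q) * deriv y x = 0 :=
  (hasDerivAt_eval_graph Q (hy.differentiableAt (hV.mem_nhds hx)).hasDerivAt)
    |>.eq_zero_of_eventuallyEq_zero (eventuallyEq_of_mem (hV.mem_nhds hx) hgraph)

theorem eval_pderiv_pderiv_graph_eq_zero (hx : x ∈ V) (hb : HasDerivAt (deriv y) b x) :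
    eval ![x, y x] (pderiv 0 (pderiv 0 Q))
        + 2 * eval ![x, y x] (pderiv 1 (pderiv 0 Q)) * deriv y x
        + eval ![x, y x] (pderiv 1 (pderiv 1 Q)) * deriv y x ^ 2
        + eval ![x, y x] (pderiv 1 Q) * b = 0 := by
  have ha := (hy.differentiableAt (hV.mem_nhds hx)).hasDerivAt
  have hF := (hasDerivAt_eval_graph (pderiv 0 Q) ha).add
    ((hasDerivAt_eval_graph (pderiv 1 Q) ha).mul hb)
  have h := hF.eq_zero_of_eventuallyEq_zero
    (eventuallyEq_of_mem (hV.mem_nhds hx) fun t ht => eval_pderiv_graph_eq_zero hV hy hgraph ht)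
  rw [pderiv_pderiv_comm 0 1] at h
  linear_combination h

end Graph

end MvPolynomial

theorem hasDerivAt_div_add_mul_deriv_div {𝕜 : Type*} [NontriviallyNormedField 𝕜]
    {y : 𝕜 → 𝕜} {x b r s : 𝕜} (hx : x ≠ 0) (hy : y x ≠ 0)
    (ha : HasDerivAt y (deriv y x) x) (hb : HasDerivAt (deriv y) b x) :
    HasDerivAt (fun t => r / t + s * deriv y t / y t)
      (-r / x ^ 2 + s * (b * y x - deriv y x ^ 2) / y x ^ 2) x := by
  refine (((hasDerivAt_const x r).div (hasDerivAt_id' x) hx).add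
    (((hb.const_mul s).div ha hy))).congr_deriv ?_
  field_simp
  ring

theorem degenerate_critical_relations {K : Type*} [Field K] {x y a b r s : K}
    (hx : x ≠ 0) (hy : y ≠ 0) (hs : s ≠ 0)
    (hG : r / x + s * a / y = 0) (hG' : -r / x ^ 2 + s * (b * y - a ^ 2) / y ^ 2 = 0) :
    r * y + s * a * x = 0 ∧ x * y * b - x * a ^ 2 + a * y = 0 := by
  have h1 : r * y + s * a * x = 0 := by
    field_simp at hG
    linear_combination hG
  refine ⟨h1, mul_left_cancel₀ (mul_ne_zero hs hx) ?_⟩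
  field_simp at hG'
  linear_combination hG' + y * h1

theorem degenerate_generator_eq_zero {R : Type*} [CommRing R] {x y a b Qx Qy Qxx Qxy Qyy : R}
    (h1 : Qx + Qy * a = 0) (h2 : Qxx + 2 * Qxy * a + Qyy * a ^ 2 + Qy * b = 0)
    (h3 : x * y * b - x * a ^ 2 + a * y = 0) :
    y * Qy ^ 2 * (Qx + x * Qxx) + x * Qx ^ 2 * (Qy + y * Qyy) - 2 * x * y * Qx * Qy * Qxy = 0 := by
  linear_combination x * y * Qy ^ 2 * h2 - Qy ^ 3 * h3
    + (y * Qy ^ 2 + x * (Qx - Qy * a) * (Qy + y * Qyy) - 2 * x * y * Qy * Qxy) * h1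

theorem stmt_8_general (Q : MvPolynomial (Fin 2) ℂ)
    (x₀ y₀ : ℂ) (hx₀ : x₀ ≠ 0) (hy₀ : y₀ ≠ 0)
    (V : Set ℂ) (hV : IsOpen V) (hx₀V : x₀ ∈ V)
    (y : ℂ → ℂ) (hy : DifferentiableOn ℂ y V) (hyx₀ : y x₀ = y₀)
    (hgraph : ∀ x ∈ V, eval ![x, y x] Q = 0)
    (r s : ℝ) (hs : 0 < s)
    (G : ℂ → ℂ)
    (hG : ∀ x : ℂ, G x = (r : ℂ) / x + (s : ℂ) * deriv y x / y x)
    (hG0 : G x₀ = 0) (hG'0 : deriv G x₀ = 0) :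
    (s : ℂ) * x₀ * eval ![x₀, y₀] (pderiv 0 Q) -
        (r : ℂ) * y₀ * eval ![x₀, y₀] (pderiv 1 Q) = 0 ∧
    y₀ * (eval ![x₀, y₀] (pderiv 1 Q)) ^ 2 *
          (eval ![x₀, y₀] (pderiv 0 Q) + x₀ * eval ![x₀, y₀] (pderiv 0 (pderiv 0 Q))) +
        x₀ * (eval ![x₀, y₀] (pderiv 0 Q)) ^ 2 *
          (eval ![x₀, y₀] (pderiv 1 Q) + y₀ * eval ![x₀, y₀] (pderiv 1 (pderiv 1 Q))) -
        2 * x₀ * y₀ * eval ![x₀, y₀] (pderiv 0 Q) * eval ![x₀, y₀] (pderiv 1 Q) *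
          eval ![x₀, y₀] (pderiv 1 (pderiv 0 Q)) = 0 := by
  subst hyx₀
  have ha : HasDerivAt y (deriv y x₀) x₀ := (hy.differentiableAt (hV.mem_nhds hx₀V)).hasDerivAt
  have hb : HasDerivAt (deriv y) (deriv (deriv y) x₀) x₀ :=
    ((hy.deriv hV).differentiableAt (hV.mem_nhds hx₀V)).hasDerivAt
  have e1 := eval_pderiv_graph_eq_zero hV hy hgraph hx₀V
  have e2 := eval_pderiv_pderiv_graph_eq_zero hV hy hgraph hx₀V hb
  have hGd := hasDerivAt_div_add_mul_deriv_div (r := (r : ℂ)) (s := (s : ℂ)) hx₀ hy₀ ha hb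
  rw [← funext hG] at hGd
  obtain ⟨e3, e4⟩ := degenerate_critical_relations hx₀ hy₀ (by exact_mod_cast hs.ne')
    ((hG x₀).symm.trans hG0) (hGd.deriv.symm.trans hG'0)
  exact ⟨by linear_combination (s : ℂ) * x₀ * e1 - eval ![x₀, y x₀] (pderiv 1 Q) * e3,
    degenerate_generator_eq_zero e1 e2 e4⟩

/-- Proposition on the set "monkey" of degenerate directions: if `(x₀, y₀)` is a
point of `{Q = 0}` with `x₀, y₀ ≠ 0` and `Q_y(x₀,y₀) ≠ 0`, parametrized locally
as a graph `y = y(x)`, and the logarithmic derivative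
`G(x) = r/x + s y'(x)/y(x)` of `x^r y(x)^s` satisfies `G(x₀) = 0 = G'(x₀)`,
then `(x₀, y₀, r/s)` satisfies the second and third generators of the ideal `J`:
`s x Q_x - r y Q_y = 0` and
`y Q_y² (Q_x + x Q_{xx}) + x Q_x² (Q_y + y Q_{yy}) - 2 x y Q_x Q_y Q_{xy} = 0`. -/
theorem stmt_8 (Q : MvPolynomial (Fin 2) ℂ)
    (x₀ y₀ : ℂ) (hx₀ : x₀ ≠ 0) (hy₀ : y₀ ≠ 0)
    (hQ0 : eval ![x₀, y₀] Q = 0)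
    (hQy : eval ![x₀, y₀] (pderiv 1 Q) ≠ 0)
    (V : Set ℂ) (hV : IsOpen V) (hx₀V : x₀ ∈ V)
    (y : ℂ → ℂ) (hy : DifferentiableOn ℂ y V) (hyx₀ : y x₀ = y₀)
    (hgraph : ∀ x ∈ V, eval ![x, y x] Q = 0)
    (r s : ℝ) (hr : 0 < r) (hs : 0 < s)
    (G : ℂ → ℂ)
    (hG : ∀ x : ℂ, G x = (r : ℂ) / x + (s : ℂ) * deriv y x / y x)
    (hG0 : G x₀ = 0) (hG'0 : deriv G x₀ = 0) :
    (s : ℂ) * x₀ * eval ![x₀, y₀] (pderiv 0 Q) -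
        (r : ℂ) * y₀ * eval ![x₀, y₀] (pderiv 1 Q) = 0 ∧
    y₀ * (eval ![x₀, y₀] (pderiv 1 Q)) ^ 2 *
          (eval ![x₀, y₀] (pderiv 0 Q) + x₀ * eval ![x₀, y₀] (pderiv 0 (pderiv 0 Q))) +
        x₀ * (eval ![x₀, y₀] (pderiv 0 Q)) ^ 2 *
          (eval ![x₀, y₀] (pderiv 1 Q) + y₀ * eval ![x₀, y₀] (pderiv 1 (pderiv 1 Q))) -
        2 * x₀ * y₀ * eval ![x₀, y₀] (pderiv 0 Q) * eval ![x₀, y₀] (pderiv 1 Q) *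
          eval ![x₀, y₀] (pderiv 1 (pderiv 0 Q)) = 0 :=
  stmt_8_general Q x₀ y₀ hx₀ hy₀ V hV hx₀V y hy hyx₀ hgraph r s hs G hG hG0 hG'0
end

section
/- Let r̂, ŝ > 0 and β ∈ ℝ with ŝ·β ≠ r̂, let c ∈ ℂ with c ≠ 0, let θ ∈ ℝ, and let φ be a function holomorphic on a punctured disk {x ∈ ℂ : 0 < |x| < δ} such that φ(x) → 0 and x·φ'(x) → 0 as x → 0. For 0 < t < δ define h_θ(t) := −r̂·log t − ŝ·log( |c| · t^{−β} · |1 + φ(t·e^{iθ})| ). Then t·h_θ'(t) → ŝ·β − r̂ as t → 0⁺. Consequently there exists t₀ ∈ (0, δ) such that h_θ is strictly monotone on (0, t₀]; moreover h_θ(t) → +∞ as t → 0⁺ if ŝ·β < r̂, and h_θ(t) → −∞ as t → 0⁺ if ŝ·β > r̂. -/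
/-!
On the ray `t ↦ t e^{iθ}` one has `h_θ(t) = (ŝβ - r̂) log t + g(t)` with
`g(t) = -ŝ log|c| - ŝ log|1 + φ(t e^{iθ})|`. Since `φ → 0`, `g` has a finite limit at `0⁺`, and
`t g'(t) = -ŝ Re(x φ'(x) / (1 + φ(x)))` at `x = t e^{iθ}` tends to `0` because `x φ'(x) → 0`.
Hence `t h_θ'(t) → ŝβ - r̂ ≠ 0`: the derivative has a constant sign near `0⁺`, and `h_θ` inherits
the behaviour of `(ŝβ - r̂) log t`.
-/

open Filter Topology Set

lemma HasDerivAt.log_norm {w : ℝ → ℂ} {w' : ℂ} {t : ℝ} (hw : HasDerivAt w w' t)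
    (h0 : w t ≠ 0) : HasDerivAt (fun s => Real.log ‖w s‖) (w' / w t).re t := by
  -- going through `‖w‖ ^ 2` avoids the branch cut of `Complex.log`
  have hfun : (fun s => Real.log ‖w s‖) = fun s => Real.log (‖w s‖ ^ 2) / 2 := by
    funext s; rw [Real.log_pow]; push_cast; ring
  rw [hfun]
  refine ((hw.norm_sq.log (by positivity)).div_const 2).congr_deriv ?_
  rw [Complex.div_re, ← Complex.normSq_eq_norm_sq, Complex.inner]
  simp only [Complex.mul_re, Complex.conj_re, Complex.conj_im]
  ring

lemma DifferentiableOn.eventually_differentiableAt_nhdsNE_zero {𝕜 E : Type*}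
    [NontriviallyNormedField 𝕜] [NormedAddCommGroup E] [NormedSpace 𝕜 E] {f : 𝕜 → E} {δ : ℝ}
    (hδ : 0 < δ) (hf : DifferentiableOn 𝕜 f {x : 𝕜 | 0 < ‖x‖ ∧ ‖x‖ < δ}) :
    ∀ᶠ x in 𝓝[≠] 0, DifferentiableAt 𝕜 f x := by
  have hopen : IsOpen {x : 𝕜 | 0 < ‖x‖ ∧ ‖x‖ < δ} := isOpen_Ioo.preimage continuous_norm
  filter_upwards [inter_mem_nhdsWithin _ (Metric.ball_mem_nhds 0 hδ)] with x ⟨hx0, hxδ⟩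
  exact hf.differentiableAt (hopen.mem_nhds ⟨norm_pos_iff.2 hx0, mem_ball_zero_iff.1 hxδ⟩)

section Ray

variable {e : ℂ} {F : ℂ → ℂ}

lemma tendsto_ofReal_mul_nhdsGT_zero (he : e ≠ 0) :
    Tendsto (fun t : ℝ => (t : ℂ) * e) (𝓝[>] 0) (𝓝[≠] 0) := by
  refine tendsto_nhdsWithin_of_tendsto_nhds_of_eventually_within _ ?_ ?_
  · have : Continuous (fun t : ℝ => (t : ℂ) * e) := by fun_prop
    simpa using (this.tendsto 0).mono_left nhdsWithin_le_nhds
  · filter_upwards [self_mem_nhdsWithin] with t (ht : 0 < t)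
    exact mul_ne_zero (Complex.ofReal_ne_zero.2 ht.ne') he

lemma hasDerivAt_log_norm_comp_ofReal_mul {t : ℝ} (hF : DifferentiableAt ℂ F (t * e))
    (h0 : F (t * e) ≠ 0) :
    HasDerivAt (fun s : ℝ => Real.log ‖F (s * e)‖) (deriv F (t * e) * e / F (t * e)).re t := by
  have hray : HasDerivAt (fun s : ℝ => (s : ℂ) * e) e t := by
    simpa using (Complex.ofRealCLM.hasDerivAt (x := t)).mul_const e
  exact (hF.hasDerivAt.comp t hray).log_norm h0

lemma eventually_hasDerivAt_log_norm_comp_ofReal_mul (he : e ≠ 0)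
    (hF : ∀ᶠ x in 𝓝[≠] 0, DifferentiableAt ℂ F x) (hF1 : Tendsto F (𝓝[≠] 0) (𝓝 1)) :
    ∀ᶠ t : ℝ in 𝓝[>] 0, HasDerivAt (fun s : ℝ => Real.log ‖F (s * e)‖)
      (deriv F (t * e) * e / F (t * e)).re t := by
  have hray := tendsto_ofReal_mul_nhdsGT_zero he
  filter_upwards [hray.eventually hF, (hF1.comp hray).eventually_ne one_ne_zero] with t hd h0
  exact hasDerivAt_log_norm_comp_ofReal_mul hd h0

lemma tendsto_log_norm_comp_ofReal_mul (he : e ≠ 0) (hF1 : Tendsto F (𝓝[≠] 0) (𝓝 1)) :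
    Tendsto (fun t : ℝ => Real.log ‖F (t * e)‖) (𝓝[>] 0) (𝓝 0) := by
  simpa using ((hF1.comp (tendsto_ofReal_mul_nhdsGT_zero he)).norm.log (by simp))

lemma tendsto_mul_logDeriv_comp_ofReal_mul (he : e ≠ 0) (hF1 : Tendsto F (𝓝[≠] 0) (𝓝 1))
    (hF' : Tendsto (fun x => x * deriv F x) (𝓝[≠] 0) (𝓝 0)) :
    Tendsto (fun t : ℝ => t * (deriv F (t * e) * e / F (t * e)).re) (𝓝[>] 0) (𝓝 0) := by
  have hray := tendsto_ofReal_mul_nhdsGT_zero he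
  have hquot :
      Tendsto (fun t : ℝ => (t * e * deriv F (t * e) / F (t * e)).re) (𝓝[>] 0) (𝓝 0) := by
    simpa [Function.comp_def, Pi.div_def] using (Complex.continuous_re.tendsto _).comp
      ((hF'.comp hray).div (hF1.comp hray) one_ne_zero)
  refine hquot.congr fun t => ?_
  rw [← Complex.re_ofReal_mul]
  ring_nf

end Ray

section LogGrowth

variable {h g g' : ℝ → ℝ} {L : ℝ}

lemma eventually_hasDerivAt_of_eventuallyEq_nhdsGT {E : Type*} [NormedAddCommGroup E]
    [NormedSpace ℝ E] {f₁ f₂ f' : ℝ → E} {a : ℝ} (hf : f₁ =ᶠ[𝓝[>] a] f₂)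
    (hd : ∀ᶠ t in 𝓝[>] a, HasDerivAt f₂ (f' t) t) :
    ∀ᶠ t in 𝓝[>] a, HasDerivAt f₁ (f' t) t := by
  filter_upwards [eventually_eventually_nhdsWithin.2 hf, hd, self_mem_nhdsWithin]
    with t hft hdt (ht : a < t)
  rw [isOpen_Ioi.nhdsWithin_eq ht] at hft
  exact hdt.congr_of_eventuallyEq hft

lemma eventually_hasDerivAt_of_eventuallyEq_log_add
    (hEq : h =ᶠ[𝓝[>] 0] fun t => L * Real.log t + g t)
    (hg : ∀ᶠ t in 𝓝[>] 0, HasDerivAt g (g' t) t) :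
    ∀ᶠ t in 𝓝[>] 0, HasDerivAt h (L * t⁻¹ + g' t) t := by
  refine eventually_hasDerivAt_of_eventuallyEq_nhdsGT hEq ?_
  filter_upwards [hg, self_mem_nhdsWithin] with t hgt (ht : 0 < t)
  exact ((Real.hasDerivAt_log ht.ne').const_mul L).add hgt

lemma tendsto_mul_deriv_of_eventuallyEq_log_add
    (hEq : h =ᶠ[𝓝[>] 0] fun t => L * Real.log t + g t)
    (hg : ∀ᶠ t in 𝓝[>] 0, HasDerivAt g (g' t) t)
    (hg' : Tendsto (fun t => t * g' t) (𝓝[>] 0) (𝓝 0)) :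
    Tendsto (fun t => t * deriv h t) (𝓝[>] 0) (𝓝 L) := by
  have hL : Tendsto (fun t => L + t * g' t) (𝓝[>] 0) (𝓝 L) := by
    simpa using hg'.const_add L
  refine hL.congr' ?_
  filter_upwards [eventually_hasDerivAt_of_eventuallyEq_log_add hEq hg, self_mem_nhdsWithin]
    with t hd (ht : 0 < t)
  rw [hd.deriv]
  field_simp

lemma tendsto_atTop_of_eventuallyEq_log_add {C : ℝ} (hL : L < 0)
    (hEq : h =ᶠ[𝓝[>] 0] fun t => L * Real.log t + g t) (hg : Tendsto g (𝓝[>] 0) (𝓝 C)) :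
    Tendsto h (𝓝[>] 0) atTop :=
  (((tendsto_const_mul_atTop_of_neg hL).2 Real.tendsto_log_nhdsGT_zero).atTop_add hg).congr'
    hEq.symm

lemma tendsto_atBot_of_eventuallyEq_log_add {C : ℝ} (hL : 0 < L)
    (hEq : h =ᶠ[𝓝[>] 0] fun t => L * Real.log t + g t) (hg : Tendsto g (𝓝[>] 0) (𝓝 C)) :
    Tendsto h (𝓝[>] 0) atBot :=
  (((tendsto_const_mul_atBot_of_pos hL).2 Real.tendsto_log_nhdsGT_zero).atBot_add hg).congr'
    hEq.symm

end LogGrowth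

lemma exists_strictMonoOn_or_strictAntiOn_Ioc_of_tendsto_mul_deriv {h : ℝ → ℝ} {L δ : ℝ}
    (hL : L ≠ 0) (hc : ∀ᶠ t in 𝓝[>] 0, ContinuousAt h t)
    (hlim : Tendsto (fun t => t * deriv h t) (𝓝[>] 0) (𝓝 L)) (hδ : 0 < δ) :
    ∃ t₀ ∈ Ioo 0 δ, StrictMonoOn h (Ioc 0 t₀) ∨ StrictAntiOn h (Ioc 0 t₀) := by
  have hsign : ∀ᶠ t in 𝓝[>] 0, 0 < L * (t * deriv h t) :=
    (hlim.const_mul L).eventually (lt_mem_nhds (mul_self_pos.2 hL))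
  obtain ⟨ε, hε, hε'⟩ := (nhdsGT_basis (0 : ℝ)).mem_iff.1
    (hc.and (hsign.and (Ioo_mem_nhdsGT hδ)))
  have hsub : Ioc 0 (ε / 2) ⊆ Ioo 0 ε := fun x hx => ⟨hx.1, hx.2.trans_lt (half_lt_self hε)⟩
  have hcont : ContinuousOn h (Ioc 0 (ε / 2)) := fun x hx => (hε' (hsub hx)).1.continuousWithinAt
  have hderiv : ∀ x ∈ interior (Ioc 0 (ε / 2)), 0 < L * deriv h x := by
    rw [interior_Ioc]
    intro x hx
    have hx' := (hε' (Ioo_subset_Ioc_self.trans hsub hx)).2.1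
    rw [mul_left_comm] at hx'
    exact pos_of_mul_pos_right hx' hx.1.le
  refine ⟨ε / 2, (hε' ⟨half_pos hε, half_lt_self hε⟩).2.2, ?_⟩
  rcases hL.lt_or_gt with hL | hL
  · exact .inr <| strictAntiOn_of_deriv_neg (convex_Ioc _ _) hcont fun x hx =>
      neg_of_mul_pos_right (hderiv x hx) hL.le
  · exact .inl <| strictMonoOn_of_deriv_pos (convex_Ioc _ _) hcont fun x hx =>
      pos_of_mul_pos_right (hderiv x hx) hL.le

theorem stmt_9_general (rhat shat β : ℝ)
    (hβ : shat * β ≠ rhat)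
    (c : ℂ) (hc : c ≠ 0) (θ : ℝ) (δ : ℝ) (hδ : 0 < δ)
    (φ : ℂ → ℂ)
    (hφ : DifferentiableOn ℂ φ {x : ℂ | 0 < ‖x‖ ∧ ‖x‖ < δ})
    (hφ0 : Tendsto φ (nhdsWithin 0 {(0 : ℂ)}ᶜ) (nhds 0))
    (hφ'0 : Tendsto (fun x : ℂ => x * deriv φ x) (nhdsWithin 0 {(0 : ℂ)}ᶜ) (nhds 0))
    (hθfun : ℝ → ℝ)
    (hdef : ∀ t : ℝ, hθfun t = -rhat * Real.log t -
      shat * Real.log (‖c‖ * t ^ (-β) *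
        ‖1 + φ ((t : ℂ) * Complex.exp (θ * Complex.I))‖)) :
    Tendsto (fun t : ℝ => t * deriv hθfun t) (nhdsWithin 0 (Set.Ioi 0))
        (nhds (shat * β - rhat)) ∧
    (∃ t₀ ∈ Set.Ioo 0 δ,
      StrictMonoOn hθfun (Set.Ioc 0 t₀) ∨ StrictAntiOn hθfun (Set.Ioc 0 t₀)) ∧
    (shat * β < rhat → Tendsto hθfun (nhdsWithin 0 (Set.Ioi 0)) atTop) ∧
    (rhat < shat * β → Tendsto hθfun (nhdsWithin 0 (Set.Ioi 0)) atBot) := by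
  set e := Complex.exp (θ * Complex.I)
  have he : e ≠ 0 := Complex.exp_ne_zero _
  set F : ℂ → ℂ := fun x => 1 + φ x
  have hF1 : Tendsto F (𝓝[≠] 0) (𝓝 1) := by simpa using hφ0.const_add 1
  have hF' : Tendsto (fun x => x * deriv F x) (𝓝[≠] 0) (𝓝 0) := by
    simpa only [F, deriv_const_add] using hφ'0
  have hFd : ∀ᶠ x in 𝓝[≠] 0, DifferentiableAt ℂ F x :=
    (hφ.eventually_differentiableAt_nhdsNE_zero hδ).mono fun x hx => hx.const_add 1
  set g : ℝ → ℝ := fun t => -(shat * Real.log ‖c‖) - shat * Real.log ‖F (t * e)‖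
  have hEq : hθfun =ᶠ[𝓝[>] 0] fun t => (shat * β - rhat) * Real.log t + g t := by
    filter_upwards [self_mem_nhdsWithin,
      ((hF1.comp (tendsto_ofReal_mul_nhdsGT_zero he)).eventually_ne one_ne_zero)]
      with t (ht : 0 < t) (hFt : 1 + φ (t * e) ≠ 0)
    rw [hdef, Real.log_mul (by positivity) (norm_ne_zero_iff.2 hFt),
      Real.log_mul (norm_ne_zero_iff.2 hc) (Real.rpow_pos_of_pos ht _).ne', Real.log_rpow ht]
    simp only [g, F]
    ring
  have hg := (eventually_hasDerivAt_log_norm_comp_ofReal_mul he hFd hF1).mono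
    fun t ht => (ht.const_mul shat).const_sub (-(shat * Real.log ‖c‖))
  have hg' := (tendsto_mul_logDeriv_comp_ofReal_mul he hF1 hF').const_mul (-shat)
  have hlim := tendsto_mul_deriv_of_eventuallyEq_log_add hEq hg
    (by simpa [mul_left_comm] using hg')
  have hgC : Tendsto g (𝓝[>] 0) (𝓝 (-(shat * Real.log ‖c‖) - shat * 0)) :=
    tendsto_const_nhds.sub ((tendsto_log_norm_comp_ofReal_mul he hF1).const_mul shat)
  refine ⟨hlim, ?_, fun hlt => tendsto_atTop_of_eventuallyEq_log_add (by linarith) hEq hgC,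
    fun hlt => tendsto_atBot_of_eventuallyEq_log_add (by linarith) hEq hgC⟩
  exact exists_strictMonoOn_or_strictAntiOn_Ioc_of_tendsto_mul_deriv (sub_ne_zero.2 hβ)
    ((eventually_hasDerivAt_of_eventuallyEq_log_add hEq hg).mono fun t ht => ht.continuousAt)
    hlim hδ

/-- Lemma "radial": the height `h_θ(t) = -r̂ log t - ŝ log(|c| t^{-β} |1 + φ(t e^{iθ})|)`
along a radial arc of a Puiseux branch `y(x) = c x^{-β} (1 + φ(x))` with
`φ(x) = o(1)`, `x φ'(x) = o(1)`, satisfies `t h_θ'(t) → ŝβ - r̂` as `t → 0⁺`;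
hence `h_θ` is strictly monotone near `0⁺`, and tends to `+∞` or `-∞`
according to whether `ŝβ < r̂` or `ŝβ > r̂`. -/
theorem stmt_9 (rhat shat β : ℝ) (hr : 0 < rhat) (hs : 0 < shat)
    (hβ : shat * β ≠ rhat)
    (c : ℂ) (hc : c ≠ 0) (θ : ℝ) (δ : ℝ) (hδ : 0 < δ)
    (φ : ℂ → ℂ)
    (hφ : DifferentiableOn ℂ φ {x : ℂ | 0 < ‖x‖ ∧ ‖x‖ < δ})
    (hφ0 : Tendsto φ (nhdsWithin 0 {(0 : ℂ)}ᶜ) (nhds 0))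
    (hφ'0 : Tendsto (fun x : ℂ => x * deriv φ x) (nhdsWithin 0 {(0 : ℂ)}ᶜ) (nhds 0))
    (hθfun : ℝ → ℝ)
    (hdef : ∀ t : ℝ, hθfun t = -rhat * Real.log t -
      shat * Real.log (‖c‖ * t ^ (-β) *
        ‖1 + φ ((t : ℂ) * Complex.exp (θ * Complex.I))‖)) :
    Tendsto (fun t : ℝ => t * deriv hθfun t) (nhdsWithin 0 (Set.Ioi 0))
        (nhds (shat * β - rhat)) ∧
    (∃ t₀ ∈ Set.Ioo 0 δ,
      StrictMonoOn hθfun (Set.Ioc 0 t₀) ∨ StrictAntiOn hθfun (Set.Ioc 0 t₀)) ∧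
    (shat * β < rhat → Tendsto hθfun (nhdsWithin 0 (Set.Ioi 0)) atTop) ∧
    (rhat < shat * β → Tendsto hθfun (nhdsWithin 0 (Set.Ioi 0)) atBot) :=
  stmt_9_general rhat shat β hβ c hc θ δ hδ φ hφ hφ0 hφ'0 hθfun hdef
end

section
/- Let g be holomorphic on a punctured disk D* = {x ∈ ℂ : 0 < |x| < δ} such that x^m·g(x) extends holomorphically to the full disk for some nonnegative integer m, and let k ≥ 1 be an integer. Suppose that for every k-th root of unity ξ ≠ 1 there exists x ∈ D* with g(ξ·x) ≠ g(x) (minimality of k). Then there exists ε ∈ (0, δ) such that the map G(x) := (xᵏ, g(x)) is injective on the punctured disk {x : 0 < |x| < ε}. -/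
/-!
If `(x ^ k, g x) = (y ^ k, g y)` with `x ≠ 0`, then `y = ξ x` for a `k`-th root of unity `ξ`
with `g (ξ x) = g x`, so it suffices that `x ↦ g (ξ x) - g x` has no zeros near `0` for each of
the finitely many `ξ ≠ 1`. After multiplying by `(ξ x) ^ m` this difference becomes
`G (ξ x) - ξ ^ m G x`, which is holomorphic on the whole disk and not identically zero by the
minimality of `k`; by the identity theorem it has no zeros on a small punctured neighbourhood
of `0`.
-/

open Filter Metric Topology

theorem Set.injOn_pow_prod_of_comp_mul_ne {K α : Type*} [Field K] {f : K → α} {k : ℕ}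
    {s : Set K} (hs : (0 : K) ∉ s)
    (hf : ∀ x ∈ s, ∀ ξ : K, ξ ^ k = 1 → ξ ≠ 1 → f (ξ * x) ≠ f x) :
    Set.InjOn (fun x => (x ^ k, f x)) s := by
  intro x hx y _ hxy
  obtain ⟨hpow, hfxy⟩ := Prod.mk.inj hxy
  have hx0 : x ≠ 0 := ne_of_mem_of_not_mem hx hs
  by_contra hne
  refine hf x hx (y / x) ?_ (div_ne_one_of_ne (Ne.symm hne)) ?_
  · rw [div_pow, ← hpow, div_self (pow_ne_zero _ hx0)]
  · rw [div_mul_cancel₀ _ hx0, hfxy]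

theorem AnalyticOnNhd.eventually_ne_zero_of_preconnected {f : ℂ → ℂ} {U : Set ℂ}
    (hf : AnalyticOnNhd ℂ f U) (hU : IsPreconnected U) {z₀ z₁ : ℂ} (h₀ : z₀ ∈ U) (h₁ : z₁ ∈ U)
    (hfz₁ : f z₁ ≠ 0) : ∀ᶠ z in 𝓝[≠] z₀, f z ≠ 0 := by
  rw [← not_frequently]
  exact fun hfreq => hfz₁ (hf.eqOn_zero_of_preconnected_of_frequently_eq_zero hU h₀ hfreq h₁)

theorem eventually_comp_mul_ne_of_exists {δ : ℝ} (hδ : 0 < δ) {g G : ℂ → ℂ} {m : ℕ}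
    (hG : DifferentiableOn ℂ G (ball 0 δ))
    (hGg : ∀ x : ℂ, 0 < ‖x‖ → ‖x‖ < δ → G x = x ^ m * g x) {ξ : ℂ} (hξ : ‖ξ‖ = 1)
    (hne : ∃ x : ℂ, 0 < ‖x‖ ∧ ‖x‖ < δ ∧ g (ξ * x) ≠ g x) :
    ∀ᶠ x in 𝓝[≠] 0, g (ξ * x) ≠ g x := by
  have hnorm : ∀ x : ℂ, ‖ξ * x‖ = ‖x‖ := fun x => by rw [norm_mul, hξ, one_mul]
  have hmaps : Set.MapsTo (ξ * ·) (ball (0 : ℂ) δ) (ball 0 δ) := fun x hx => by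
    simpa [hξ] using hx
  have hdiff : AnalyticOnNhd ℂ (fun x => G (ξ * x) - ξ ^ m * G x) (ball 0 δ) :=
    ((hG.comp (differentiableOn_id.const_mul ξ) hmaps).sub (hG.const_mul _)).analyticOnNhd
      isOpen_ball
  have hval : ∀ x : ℂ, 0 < ‖x‖ → ‖x‖ < δ →
      G (ξ * x) - ξ ^ m * G x = (ξ * x) ^ m * (g (ξ * x) - g x) := fun x hx hxδ => by
    rw [hGg x hx hxδ, hGg (ξ * x) (by rwa [hnorm]) (by rwa [hnorm])]
    ring
  have hξ0 : ξ ≠ 0 := norm_ne_zero_iff.mp (by simp [hξ])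
  obtain ⟨x₁, hx₁, hx₁δ, hgx₁⟩ := hne
  have hdiffx₁ : G (ξ * x₁) - ξ ^ m * G x₁ ≠ 0 := by
    rw [hval x₁ hx₁ hx₁δ]
    exact mul_ne_zero (pow_ne_zero _ (mul_ne_zero hξ0 (norm_pos_iff.mp hx₁)))
      (sub_ne_zero_of_ne hgx₁)
  filter_upwards [hdiff.eventually_ne_zero_of_preconnected (convex_ball 0 δ).isPreconnected
      (mem_ball_self hδ) (mem_ball_zero_iff.mpr hx₁δ) hdiffx₁, self_mem_nhdsWithin,
      nhdsWithin_le_nhds (ball_mem_nhds 0 hδ)] with x hx hx0 hxδ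
  rw [hval x (norm_pos_iff.mpr hx0) (mem_ball_zero_iff.mp hxδ)] at hx
  exact sub_ne_zero.mp (right_ne_zero_of_mul hx)

theorem stmt_11_general (δ : ℝ) (hδ : 0 < δ) (g : ℂ → ℂ)
    (m : ℕ) (G : ℂ → ℂ) (hG : DifferentiableOn ℂ G (Metric.ball 0 δ))
    (hGg : ∀ x : ℂ, 0 < ‖x‖ → ‖x‖ < δ → G x = x ^ m * g x)
    (k : ℕ) (hk : 1 ≤ k)
    (hmin : ∀ ξ : ℂ, ξ ^ k = 1 → ξ ≠ 1 →
      ∃ x : ℂ, 0 < ‖x‖ ∧ ‖x‖ < δ ∧ g (ξ * x) ≠ g x) :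
    ∃ ε : ℝ, 0 < ε ∧ ε < δ ∧
      Set.InjOn (fun x : ℂ => (x ^ k, g x))
        {x : ℂ | 0 < ‖x‖ ∧ ‖x‖ < ε} := by
  have hroot : ∀ ξ, ξ ∈ Polynomial.nthRootsFinset k (1 : ℂ) ↔ ξ ^ k = 1 :=
    fun ξ => Polynomial.mem_nthRootsFinset hk 1
  have hev : ∀ᶠ x in 𝓝[≠] 0, ∀ ξ ∈ (Polynomial.nthRootsFinset k (1 : ℂ)).erase 1,
      g (ξ * x) ≠ g x := by
    refine (eventually_all_finset _).2 fun ξ hξ => ?_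
    obtain ⟨hξ1, hξk⟩ := Finset.mem_erase.mp hξ
    rw [hroot] at hξk
    exact eventually_comp_mul_ne_of_exists hδ hG hGg
      (Complex.norm_eq_one_of_pow_eq_one hξk (by omega)) (hmin ξ hξk hξ1)
  obtain ⟨ε, hε, hεg⟩ := mem_nhdsWithin_iff.mp hev
  refine ⟨min ε (δ / 2), by positivity, by linarith [min_le_right ε (δ / 2)], ?_⟩
  refine Set.injOn_pow_prod_of_comp_mul_ne (by simp) fun x hx ξ hξk hξ1 => ?_
  refine hεg ⟨?_, norm_pos_iff.mp hx.1⟩ ξ (Finset.mem_erase.mpr ⟨hξ1, (hroot ξ).mpr hξk⟩)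
  exact mem_ball_zero_iff.mpr (hx.2.trans_le (min_le_left _ _))

/-- Main step of Theorem "classify" (i)–(ii): if `g` is holomorphic on the
punctured disk with at worst a pole at `0` (witnessed by the holomorphic
extension `G` of `x^m g(x)`), and `k ≥ 1` is minimal in the sense that for
every `k`-th root of unity `ξ ≠ 1` the functions `g(ξ ·)` and `g` differ
somewhere on the punctured disk, then `x ↦ (xᵏ, g(x))` is injective on a
sufficiently small punctured disk. -/
theorem stmt_11 (δ : ℝ) (hδ : 0 < δ) (g : ℂ → ℂ)
    (hg : DifferentiableOn ℂ g {x : ℂ | 0 < ‖x‖ ∧ ‖x‖ < δ})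
    (m : ℕ) (G : ℂ → ℂ) (hG : DifferentiableOn ℂ G (Metric.ball 0 δ))
    (hGg : ∀ x : ℂ, 0 < ‖x‖ → ‖x‖ < δ → G x = x ^ m * g x)
    (k : ℕ) (hk : 1 ≤ k)
    (hmin : ∀ ξ : ℂ, ξ ^ k = 1 → ξ ≠ 1 →
      ∃ x : ℂ, 0 < ‖x‖ ∧ ‖x‖ < δ ∧ g (ξ * x) ≠ g x) :
    ∃ ε : ℝ, 0 < ε ∧ ε < δ ∧
      Set.InjOn (fun x : ℂ => (x ^ k, g x))
        {x : ℂ | 0 < ‖x‖ ∧ ‖x‖ < ε} :=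
  stmt_11_general δ hδ g m G hG hGg k hk hmin
end

section
/- Let P and Q be polynomials in two variables with complex coefficients, let ε > 0 and L₀ > 0, and suppose Q(x, y) ≠ 0 whenever |x| = ε and |y| ≥ L₀. Let d be the degree of P in the variable y. Then for all integers r ≥ 0 and s > d, and for every L ≥ L₀, the iterated contour integral ∮_{|x|=ε} ∮_{|y|=L} x^{−r−1}·y^{−s−1}·P(x,y)/Q(x,y) dy dx equals 0. Moreover, for each fixed x with |x| = ε, already the inner integral ∮_{|y|=L} y^{−s−1}·P(x,y)/Q(x,y) dy equals 0. -/
/-!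
For `|x| = ε` the function `f y = y ^ (-s-1) * P(x,y) / Q(x,y)` is holomorphic on `|y| ≥ L₀`, and
`y * f y → 0` as `y → ∞` because `deg_y P < s`. By Cauchy's theorem on annuli its integral over
`|y| = L` does not depend on `L ≥ L₀`, while it is bounded by `2π sup_{|y| = L} ‖y * f y‖ → 0`.
Hence the inner integral vanishes identically on `|x| = ε`, and so does the outer one.
-/

open MvPolynomial Filter Topology Bornology Metric Asymptotics Real

section CircleIntegral

variable {E : Type*} [NormedAddCommGroup E] [NormedSpace ℂ E] {f : ℂ → E} {c : ℂ}

theorem circleIntegral.norm_integral_le_of_norm_sub_smul_le_const {R C : ℝ} (hR : 0 < R)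
    (hf : ∀ z ∈ sphere c R, ‖(z - c) • f z‖ ≤ C) : ‖∮ z in C(c, R), f z‖ ≤ 2 * π * C := by
  have hbound : ∀ z ∈ sphere c R, ‖f z‖ ≤ C / R := fun z hz => by
    rw [le_div_iff₀ hR, mul_comm, ← mem_sphere_iff_norm.mp hz, ← norm_smul]
    exact hf z hz
  calc ‖∮ z in C(c, R), f z‖ ≤ 2 * π * R * (C / R) :=
        circleIntegral.norm_integral_le_of_norm_le_const hR.le hbound
    _ = 2 * π * C := by field_simp

theorem circleIntegral.tendsto_integral_atTop_zero
    (hf : Tendsto (fun z => (z - c) • f z) (cobounded ℂ) (𝓝 0)) :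
    Tendsto (fun R : ℝ => ∮ z in C(c, R), f z) atTop (𝓝 0) := by
  rw [NormedAddGroup.tendsto_nhds_zero] at hf ⊢
  intro δ hδ
  obtain ⟨M, -, hM⟩ := (hasBasis_cobounded_compl_closedBall c).eventually_iff.mp
    (hf (δ / (4 * π)) (by positivity))
  filter_upwards [eventually_gt_atTop (max M 0)] with R hR
  have hRpos : 0 < R := (le_max_right M 0).trans_lt hR
  calc ‖∮ z in C(c, R), f z‖ ≤ 2 * π * (δ / (4 * π)) :=
        circleIntegral.norm_integral_le_of_norm_sub_smul_le_const hRpos fun z hz =>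
          (hM <| by simpa [mem_sphere.mp hz] using (le_max_left M 0).trans_lt hR).le
    _ < δ := by field_simp; linarith

theorem circleIntegral_eq_zero_of_differentiableOn_compl_ball_of_tendsto {R : ℝ} (hR : 0 < R)
    (hd : DifferentiableOn ℂ f (ball c R)ᶜ)
    (hf : Tendsto (fun z => (z - c) • f z) (cobounded ℂ) (𝓝 0)) :
    ∮ z in C(c, R), f z = 0 := by
  have hconst : ∀ᶠ R' in atTop, ∮ z in C(c, R'), f z = ∮ z in C(c, R), f z := by
    filter_upwards [eventually_ge_atTop R] with R' hR'
    refine Complex.circleIntegral_eq_of_differentiable_on_annulus_off_countable hR hR'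
      Set.countable_empty (hd.continuousOn.mono fun z hz => hz.2) fun z hz => ?_
    have hz : z ∈ (closedBall c R)ᶜ := hz.1.2
    exact hd.differentiableAt <| mem_of_superset (isClosed_closedBall.isOpen_compl.mem_nhds hz)
      (Set.compl_subset_compl.mpr ball_subset_closedBall)
  exact tendsto_nhds_unique (tendsto_const_nhds.congr' (EventuallyEq.symm hconst))
    (circleIntegral.tendsto_integral_atTop_zero hf)

end CircleIntegral

namespace Polynomial

open scoped Polynomial

theorem tendsto_eval_div_pow_mul_eval_cobounded {𝕜 : Type*} [NormedField 𝕜] {p q : 𝕜[X]}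
    {s : ℕ} (hq : q ≠ 0) (hs : p.degree < s) :
    Tendsto (fun z => p.eval z / (z ^ s * q.eval z)) (cobounded 𝕜) (𝓝 0) := by
  have hdeg : p.degree < (X ^ s * q).degree := by
    rw [degree_mul, degree_X_pow, degree_eq_natDegree hq]
    exact hs.trans_le (by exact_mod_cast Nat.le_add_right s q.natDegree)
  simpa using (isLittleO_cobounded_of_degree_lt hdeg).tendsto_div_nhds_zero

theorem circleIntegral_zpow_mul_eval_div_eval_eq_zero {p q : ℂ[X]} {s : ℕ} {R : ℝ} (hR : 0 < R)
    (hq : ∀ z : ℂ, R ≤ ‖z‖ → q.eval z ≠ 0) (hs : p.degree < s) :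
    ∮ z in C(0, R), z ^ (-(s : ℤ) - 1) * (p.eval z / q.eval z) = 0 := by
  have hq0 : q ≠ 0 := by
    rintro rfl
    exact hq R (by simp [abs_of_pos hR]) eval_zero
  refine circleIntegral_eq_zero_of_differentiableOn_compl_ball_of_tendsto hR
    (fun z hz => ?_) ((tendsto_eval_div_pow_mul_eval_cobounded hq0 hs).congr' ?_)
  · have hz : R ≤ ‖z‖ := by simpa using hz
    have hz0 : z ≠ 0 := norm_pos_iff.mp (hR.trans_le hz)
    exact ((differentiableAt_zpow.mpr (Or.inl hz0)).mul
      (p.differentiableAt.div q.differentiableAt (hq z hz))).differentiableWithinAt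
  · filter_upwards [eventually_ne_cobounded 0] with z hz
    rw [sub_zero, smul_eq_mul, zpow_sub₀ hz, zpow_neg, zpow_natCast, zpow_one]
    field_simp

end Polynomial

namespace MvPolynomial

variable {R : Type*} [CommSemiring R]

theorem eval_vecCons_eq_eval_aeval (p : MvPolynomial (Fin 2) R) (x y : R) :
    eval ![x, y] p = (aeval ![Polynomial.C x, Polynomial.X] p).eval y := by
  rw [← Polynomial.coe_aeval_eq_eval, comp_aeval_apply, ← aeval_eq_eval]
  congr
  ext i
  fin_cases i <;> simp

theorem natDegree_aeval_C_X_le_degreeOf (p : MvPolynomial (Fin 2) R) (x : R) :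
    (aeval ![Polynomial.C x, Polynomial.X] p).natDegree ≤ degreeOf 1 p := by
  rw [aeval_eq_eval₂Hom, coe_eval₂Hom, eval₂_eq']
  refine Polynomial.natDegree_sum_le_of_forall_le _ _ fun m hm => ?_
  rw [Fin.prod_univ_two]
  simp only [Matrix.cons_val_zero, Matrix.cons_val_one, ← Polynomial.C_pow,
    Polynomial.algebraMap_eq, ← mul_assoc, ← Polynomial.C_mul]
  exact (Polynomial.natDegree_C_mul_le _ _).trans <| (Polynomial.natDegree_X_pow_le _).trans <|
    (degreeOf_eq_sup 1 p).symm ▸ Finset.le_sup (f := fun m => m 1) hm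

end MvPolynomial

/-- The vanishing claim (2.5): if `Q(x,y) ≠ 0` whenever `|x| = ε` and `|y| ≥ L₀`,
and `d` is the degree of `P` in `y`, then for all `r ≥ 0`, `s > d` and `L ≥ L₀`
the iterated Cauchy integral
`∮_{|x|=ε} x^{-r-1} ∮_{|y|=L} y^{-s-1} P(x,y)/Q(x,y) dy dx` vanishes, and in
fact for each `x` with `|x| = ε` the inner integral already vanishes. -/
theorem stmt_12 (P Q : MvPolynomial (Fin 2) ℂ) (ε L₀ : ℝ)
    (hε : 0 < ε) (hL₀ : 0 < L₀)
    (hQ : ∀ x y : ℂ, ‖x‖ = ε → L₀ ≤ ‖y‖ → eval ![x, y] Q ≠ 0)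
    (d : ℕ) (hd : d = degreeOf 1 P) :
    ∀ r s : ℕ, d < s → ∀ L : ℝ, L₀ ≤ L →
      ((∮ x in C(0, ε), x ^ (-(r : ℤ) - 1) *
          ∮ y in C(0, L), y ^ (-(s : ℤ) - 1) * (eval ![x, y] P / eval ![x, y] Q)) = 0) ∧
      (∀ x : ℂ, ‖x‖ = ε →
        (∮ y in C(0, L), y ^ (-(s : ℤ) - 1) * (eval ![x, y] P / eval ![x, y] Q)) = 0) := by
  intro r s hds L hL
  have inner : ∀ x : ℂ, ‖x‖ = ε →
      (∮ y in C(0, L), y ^ (-(s : ℤ) - 1) * (eval ![x, y] P / eval ![x, y] Q)) = 0 := by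
    intro x hx
    simp only [eval_vecCons_eq_eval_aeval _ x]
    refine Polynomial.circleIntegral_zpow_mul_eval_div_eval_eq_zero (hL₀.trans_le hL)
      (fun y hy => ?_) ?_
    · rw [← eval_vecCons_eq_eval_aeval]
      exact hQ x y hx (hL.trans hy)
    · exact (Polynomial.degree_le_of_natDegree_le (natDegree_aeval_C_X_le_degreeOf P x)).trans_lt
        (by exact_mod_cast hd ▸ hds)
  refine ⟨?_, inner⟩
  calc _ = ∮ _ in C(0, ε), (0 : ℂ) := circleIntegral.integral_congr hε.le fun x hx => by
        rw [inner x (mem_sphere_zero_iff_norm.mp hx), mul_zero]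
    _ = 0 := by simp [circleIntegral]
end
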